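/- arXiv:1802.09250 — 3 statements merged into one kernel-verified Lean document; each statement's English description precedes it below -/
import Mathlib

section
/- Every key edge of a hamiltonian threshold graph lies in at least one Hamilton cycle. -/
open SimpleGraph Finset

/-- A threshold graph: there exist a nonnegative vertex weight function and a
nonnegative threshold `t` such that distinct vertices are adjacent iff the sum
of their weights exceeds `t`. -/
def SimpleGraph.IsThreshold {V : Type} (G : SimpleGraph V) : Prop :=
  ∃ (f : V → ℝ) (t : ℝ), (∀ v, 0 ≤ f v) ∧ 0 ≤ t ∧
    ∀ u v : V, u ≠ v → (G.Adj u v ↔ f u + f v > t)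

/-- Degree of a vertex (no decidability assumptions). -/
noncomputable def SimpleGraph.deg {V : Type} [Fintype V] [DecidableEq V] (G : SimpleGraph V) (v : V) : ℕ :=
  Nat.card {u // G.Adj v u}

/-- `δ 0 = 0 < δ 1 < ⋯ < δ m` are exactly the degrees occurring in `G`;
the degree partition of `G` is `D_i = {v : deg v = δ i}`, `i = 0, …, m`. -/
structure SimpleGraph.DegreePartition {V : Type} [Fintype V] [DecidableEq V] (G : SimpleGraph V)
    (m : ℕ) (δ : ℕ → ℕ) : Prop where
  zero : δ 0 = 0
  mono : ∀ i j, i < j → j ≤ m → δ i < δ j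
  cover : ∀ v : V, ∃ i ≤ m, G.deg v = δ i
  attained : ∀ i, 1 ≤ i → i ≤ m → ∃ v : V, G.deg v = δ i

/-- The degree set `D_i` of the degree partition. -/
noncomputable def SimpleGraph.Dset {V : Type} [Fintype V] [DecidableEq V] (G : SimpleGraph V)
    (δ : ℕ → ℕ) (i : ℕ) : Finset V :=
  Finset.univ.filter (fun v => G.deg v = δ i)

/-- A key edge of a threshold graph with degree partition `D_0, …, D_m`: an edge
joining `D_k` and `D_{m+1-k}` for some `1 ≤ k ≤ ⌈m/2⌉`. -/
def SimpleGraph.IsKeyEdge {V : Type} [Fintype V] [DecidableEq V] (G : SimpleGraph V)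
    (m : ℕ) (δ : ℕ → ℕ) (e : Sym2 V) : Prop :=
  e ∈ G.edgeSet ∧ ∃ x y k, e = s(x, y) ∧ 1 ≤ k ∧ k ≤ (m + 1) / 2 ∧
    G.deg x = δ k ∧ G.deg y = δ (m + 1 - k)

/-- The number of Hamilton cycles of `G`, counted as unordered spanning cycles
(a cycle is identified with its edge set). -/
noncomputable def SimpleGraph.hamCycleCount {V : Type} [Fintype V] [DecidableEq V]
    (G : SimpleGraph V) : ℕ :=
  Nat.card {s : Finset (Sym2 V) // ∃ (v : V) (w : G.Walk v v),
    w.IsHamiltonianCycle ∧ w.edges.toFinset = s}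

/-- The multiset of degrees of `G`. -/
noncomputable def SimpleGraph.degMultiset {V : Type} [Fintype V] [DecidableEq V] (G : SimpleGraph V) :
    Multiset ℕ :=
  Finset.univ.val.map G.deg

/-- The degree sequence `n-1, n-1, n-2, …, ⌈n/2⌉, ⌈n/2⌉, …, 3, 2` of the graph `Gₙ`,
as a multiset: the values `2, …, n-1` together with an extra copy of `⌈n/2⌉` and of `n-1`. -/
def gnDegSeq (n : ℕ) : Multiset ℕ :=
  (Multiset.range (n - 2)).map (· + 2) + {(n + 1) / 2, n - 1}

/-- An independent set in a graph. -/
def SimpleGraph.IsIndepSet' {V : Type} (G : SimpleGraph V) (S : Set V) : Prop :=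
  ∀ u ∈ S, ∀ v ∈ S, u ≠ v → ¬ G.Adj u v

/-!
In a threshold graph the neighbourhood of a vertex `w` consists of all other vertices whose
degree is at least the least degree `θ(w)` of a neighbour of `w`, and `θ` is a strictly
decreasing function of the degree. Hence `θ` reverses the positive degree classes,
`θ(D_i) = δ_{m+1-i}`, and `D_i`, `D_j` are joined iff `i + j ≥ m + 1`. For a key edge `xy` with
`x ∈ D_k`, `y ∈ D_{m+1-k}` this makes every neighbour of `x` adjacent to every other neighbour
of `y`. Running along a Hamilton cycle `x q … y s … x` that avoids `xy`, the 2-opt move to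
`x y … q s … x` then yields one through `xy`.
-/

namespace SimpleGraph

namespace Walk

variable {V : Type} [DecidableEq V] {G : SimpleGraph V}

lemma cons_isHamiltonianCycle_iff {u v : V} (h : G.Adj u v) (p : G.Walk v u) :
    (cons h p).IsHamiltonianCycle ↔ p.IsHamiltonian ∧ s(u, v) ∉ p.edges := by
  rw [isHamiltonianCycle_iff_isCycle_and_support_count_tail_eq_one, cons_isCycle_iff,
    support_cons, List.tail_cons]
  exact ⟨fun ⟨⟨_, he⟩, hc⟩ => ⟨hc, he⟩, fun ⟨hp, he⟩ => ⟨⟨hp.isPath, he⟩, hp⟩⟩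

lemma IsHamiltonian.reverse_append_cons {q y s x : V} {p : G.Walk q y} {r : G.Walk s x}
    {hys : G.Adj y s} (h : (p.append (cons hys r)).IsHamiltonian) (hqs : G.Adj q s) :
    (p.reverse.append (cons hqs r)).IsHamiltonian := by
  intro z
  simpa [support_append, List.count_append] using h z

end Walk

open Walk in
theorem exists_isHamiltonianCycle_mem_edges {V : Type} [DecidableEq V] {G : SimpleGraph V}
    {x y : V} (hxy : G.Adj x y) (hnbr : ∀ q s, G.Adj x q → G.Adj y s → q ≠ s → G.Adj q s)
    {c : G.Walk x x} (hc : c.IsHamiltonianCycle) :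
    ∃ c' : G.Walk x x, c'.IsHamiltonianCycle ∧ s(x, y) ∈ c'.edges := by
  by_cases hmem : s(x, y) ∈ c.edges
  · exact ⟨c, hc, hmem⟩
  cases c with
  | nil => exact absurd hc.isCycle not_isCycle_nil
  | @cons _ q _ hxq p =>
    obtain ⟨hp, -⟩ := (cons_isHamiltonianCycle_iff hxq p).1 hc
    obtain ⟨take, drop, rfl⟩ := mem_support_iff_exists_append.1 (hp.mem_support y)
    cases drop with
    | nil => exact absurd hxy G.irrefl
    | @cons _ s _ hys r =>
      simp only [edges_cons, edges_append, List.mem_cons, List.mem_append, not_or] at hmem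
      obtain ⟨-, hmem_take, hmem_ys, hmem_r⟩ := hmem
      have hqs : q ≠ s := by
        rintro rfl
        have hcount := hp q
        rw [support_append, support_cons, List.tail_cons, List.count_append] at hcount
        have := List.count_pos_iff.2 take.start_mem_support
        have := List.count_pos_iff.2 r.start_mem_support
        omega
      have hsx : s ≠ x := by
        rintro rfl
        exact hmem_ys Sym2.eq_swap
      refine ⟨cons hxy (take.reverse.append (cons (hnbr q s hxq hys hqs) r)),
        (cons_isHamiltonianCycle_iff _ _).2 ⟨hp.reverse_append_cons _, ?_⟩, by simp⟩
      simp only [edges_append, edges_reverse, edges_cons, List.mem_append, List.mem_reverse,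
        List.mem_cons, Sym2.eq_iff, not_or]
      exact ⟨hmem_take, ⟨fun h => hxq.ne h.1, fun h => hsx h.1.symm⟩, hmem_r⟩

variable {V : Type} [Fintype V] [DecidableEq V] {G : SimpleGraph V}

lemma deg_eq_degree [DecidableRel G.Adj] (v : V) : G.deg v = G.degree v := by
  rw [deg, ← card_neighborSet_eq_degree, Nat.card_eq_fintype_card]
  rfl

lemma deg_pos_of_adj {w u : V} (h : G.Adj w u) : 0 < G.deg w :=
  Nat.card_pos_iff.2 ⟨⟨⟨u, h⟩⟩, inferInstance⟩

lemma exists_adj_of_deg_pos {w : V} (h : 0 < G.deg w) : ∃ u, G.Adj w u := by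
  obtain ⟨⟨⟨u, hu⟩⟩, -⟩ := Nat.card_pos_iff.1 h
  exact ⟨u, hu⟩

/-- `θ(w)`, the least degree of a neighbour of `w` (junk value `0` when `w` is isolated). -/
noncomputable def minNeighborDeg (G : SimpleGraph V) (w : V) : ℕ :=
  sInf (G.deg '' G.neighborSet w)

lemma minNeighborDeg_le {w u : V} (h : G.Adj w u) : G.minNeighborDeg w ≤ G.deg u :=
  Nat.sInf_le ⟨u, h, rfl⟩

lemma exists_adj_deg_eq_minNeighborDeg {w : V} (hw : 0 < G.deg w) :
    ∃ v, G.Adj w v ∧ G.deg v = G.minNeighborDeg w := by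
  obtain ⟨u, hu⟩ := exists_adj_of_deg_pos hw
  exact Nat.sInf_mem (s := G.deg '' G.neighborSet w) ⟨_, u, hu, rfl⟩

namespace IsThreshold

variable (hG : G.IsThreshold)
include hG

/-- If `v` missed `w` then `f v < f u`, so every neighbour of `v` other than `u` is a neighbour
of `u`; together with `w` this gives `u` more neighbours than `v`. -/
lemma adj_of_deg_le {u v w : V} (hd : G.deg u ≤ G.deg v) (huw : G.Adj u w) (hwv : w ≠ v) :
    G.Adj v w := by
  classical
  obtain ⟨f, t, -, -, hf⟩ := hG
  by_contra hvw
  have hfu : f u + f w > t := (hf u w huw.ne).1 huw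
  have hfv : ¬ f v + f w > t := fun h => hvw ((hf v w hwv.symm).2 h)
  have hsub : (G.neighborFinset v).erase u ⊆ (G.neighborFinset u).erase v := by
    intro z hz
    obtain ⟨hzu, hvz⟩ := Finset.mem_erase.1 hz
    rw [mem_neighborFinset] at hvz
    have : f u + f z > t := by linarith [(hf v z hvz.ne).1 hvz]
    exact Finset.mem_erase.2 ⟨hvz.ne', (mem_neighborFinset _ _ _).2 ((hf u z hzu.symm).2 this)⟩
  have hlt := Finset.card_lt_card <| (Finset.ssubset_iff_of_subset hsub).2
    ⟨w, Finset.mem_erase.2 ⟨hwv, (mem_neighborFinset _ _ _).2 huw⟩,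
      fun h => hvw ((mem_neighborFinset _ _ _).1 (Finset.mem_of_mem_erase h))⟩
  simp only [Finset.card_erase_eq_ite, card_neighborFinset_eq_degree, mem_neighborFinset,
    G.adj_comm v u] at hlt
  rw [deg_eq_degree, deg_eq_degree] at hd
  split_ifs at hlt <;> omega

lemma adj_iff_minNeighborDeg_le {w u : V} (hw : 0 < G.deg w) (hu : u ≠ w) :
    G.Adj w u ↔ G.minNeighborDeg w ≤ G.deg u := by
  refine ⟨minNeighborDeg_le, fun h => ?_⟩
  obtain ⟨v, hwv, hv⟩ := exists_adj_deg_eq_minNeighborDeg hw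
  rcases eq_or_ne u v with rfl | huv
  · exact hwv
  · exact (hG.adj_of_deg_le (hv ▸ h) hwv.symm hu.symm).symm

lemma deg_eq_of_minNeighborDeg_eq {a b : V} (ha : 0 < G.deg a) (hb : 0 < G.deg b)
    (h : G.minNeighborDeg a = G.minNeighborDeg b) : G.deg a = G.deg b := by
  classical
  set A : Finset V := {u | G.minNeighborDeg a ≤ G.deg u}
  have hdeg : ∀ w, 0 < G.deg w → G.minNeighborDeg w = G.minNeighborDeg a →
      G.deg w = #(A.erase w) := by
    intro w hw hθ
    rw [deg_eq_degree, ← card_neighborFinset_eq_degree]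
    congr 1
    ext u
    rw [mem_neighborFinset, Finset.mem_erase, Finset.mem_filter, ← hθ]
    by_cases huw : u = w
    · simp [huw]
    · simp [huw, hG.adj_iff_minNeighborDeg_le hw huw]
  have hA : ∀ w, w ∈ A ↔ G.minNeighborDeg a ≤ G.deg w := by simp [A]
  have hda := hdeg a ha rfl
  have hdb := hdeg b hb h.symm
  rw [Finset.card_erase_eq_ite] at hda hdb
  have := hA a
  have := hA b
  split_ifs at hda hdb <;> grind

lemma minNeighborDeg_le_of_deg_le {a b : V} (ha : 0 < G.deg a) (hd : G.deg a ≤ G.deg b) :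
    G.minNeighborDeg b ≤ G.minNeighborDeg a := by
  obtain ⟨c, hac, hc⟩ := exists_adj_deg_eq_minNeighborDeg ha
  rcases eq_or_ne c b with rfl | hcb
  · exact (minNeighborDeg_le hac.symm).trans (hd.trans hc.le)
  · exact hc ▸ minNeighborDeg_le (hG.adj_of_deg_le hd hac hcb)

lemma minNeighborDeg_eq_of_deg_eq {a b : V} (ha : 0 < G.deg a) (h : G.deg a = G.deg b) :
    G.minNeighborDeg a = G.minNeighborDeg b :=
  le_antisymm (hG.minNeighborDeg_le_of_deg_le (h ▸ ha) h.ge)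
    (hG.minNeighborDeg_le_of_deg_le ha h.le)

lemma minNeighborDeg_lt_of_deg_lt {a b : V} (ha : 0 < G.deg a) (hd : G.deg a < G.deg b) :
    G.minNeighborDeg b < G.minNeighborDeg a :=
  (hG.minNeighborDeg_le_of_deg_le ha hd.le).lt_of_ne fun h =>
    hd.ne (hG.deg_eq_of_minNeighborDeg_eq ha (ha.trans hd) h.symm)

end IsThreshold

namespace DegreePartition

variable {m : ℕ} {δ : ℕ → ℕ} (hdp : G.DegreePartition m δ)
include hdp

lemma strictMonoOn : StrictMonoOn δ (Set.Iic m) :=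
  fun i _ j hj hij => hdp.mono i j hij hj

lemma pos {i : ℕ} (hi : i ∈ Set.Icc 1 m) : 0 < δ i :=
  hdp.zero ▸ hdp.mono 0 i hi.1 hi.2

lemma exists_eq_of_deg_pos {v : V} (h : 0 < G.deg v) : ∃ i ∈ Set.Icc 1 m, G.deg v = δ i := by
  obtain ⟨i, him, hi⟩ := hdp.cover v
  refine ⟨i, ⟨Nat.one_le_iff_ne_zero.2 ?_, him⟩, hi⟩
  rintro rfl
  rw [hi, hdp.zero] at h
  exact h.false

end DegreePartition

end SimpleGraph

lemma StrictAntiOn.eq_add_one_sub_of_mapsTo_Icc {m : ℕ} {S : ℕ → ℕ}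
    (hS : StrictAntiOn S (Set.Icc 1 m)) (hmaps : Set.MapsTo S (Set.Icc 1 m) (Set.Icc 1 m))
    {l : ℕ} (hl : l ∈ Set.Icc 1 m) : S l = m + 1 - l := by
  have hstep : ∀ d a, 1 ≤ a → a + d ≤ m → S (a + d) + d ≤ S a := by
    intro d
    induction d with
    | zero => simp
    | succ d ih =>
      intro a ha had
      have := hS ⟨by omega, by omega⟩ ⟨by omega, had⟩ (Nat.lt_succ_self (a + d))
      have := ih a ha (by omega)
      omega
  obtain ⟨hl1, hlm⟩ := hl
  have hlow := hstep (m - l) l hl1 (by omega)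
  have hup := hstep (l - 1) 1 le_rfl (by omega)
  rw [Nat.add_sub_cancel' hlm] at hlow
  rw [Nat.add_sub_cancel' hl1] at hup
  have := (hmaps ⟨hl1.trans hlm, le_rfl⟩).1
  have := (hmaps ⟨le_rfl, hl1.trans hlm⟩).2
  omega

namespace SimpleGraph.IsThreshold

variable {V : Type} [Fintype V] [DecidableEq V] {G : SimpleGraph V} {m : ℕ} {δ : ℕ → ℕ}
  (hG : G.IsThreshold) (hdp : G.DegreePartition m δ)
include hG hdp

theorem minNeighborDeg_eq {i : ℕ} (hi : i ∈ Set.Icc 1 m) {v : V} (hv : G.deg v = δ i) :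
    G.minNeighborDeg v = δ (m + 1 - i) := by
  have : Nonempty V := ⟨v⟩
  choose! rep hrep using fun l (hl : l ∈ Set.Icc 1 m) => hdp.attained l hl.1 hl.2
  have hθ : ∀ l ∈ Set.Icc 1 m, ∃ j ∈ Set.Icc 1 m, G.minNeighborDeg (rep l) = δ j := by
    intro l hl
    obtain ⟨u, hu, hdeg⟩ := exists_adj_deg_eq_minNeighborDeg ((hrep l hl).symm ▸ hdp.pos hl)
    obtain ⟨j, hj, hj'⟩ := hdp.exists_eq_of_deg_pos (deg_pos_of_adj hu.symm)
    exact ⟨j, hj, hdeg ▸ hj'⟩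
  choose! S hS hSθ using hθ
  have hanti : StrictAntiOn S (Set.Icc 1 m) := by
    intro a ha b hb hab
    have := hG.minNeighborDeg_lt_of_deg_lt (a := rep a) (b := rep b)
      ((hrep a ha).symm ▸ hdp.pos ha) (by rw [hrep a ha, hrep b hb]; exact hdp.mono a b hab hb.2)
    rw [hSθ a ha, hSθ b hb] at this
    exact (hdp.strictMonoOn.lt_iff_lt (hS b hb).2 (hS a ha).2).1 this
  rw [hG.minNeighborDeg_eq_of_deg_eq (hv ▸ hdp.pos hi) (hv.trans (hrep i hi).symm), hSθ i hi,
    hanti.eq_add_one_sub_of_mapsTo_Icc hS hi]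

theorem adj_iff_le_add {u v : V} {i j : ℕ} (hi : i ∈ Set.Icc 1 m) (hj : j ∈ Set.Icc 1 m)
    (hu : G.deg u = δ i) (hv : G.deg v = δ j) (huv : u ≠ v) : G.Adj u v ↔ m + 1 ≤ i + j := by
  rw [hG.adj_iff_minNeighborDeg_le (hu ▸ hdp.pos hi) huv.symm, hG.minNeighborDeg_eq hdp hi hu,
    hv, hdp.strictMonoOn.le_iff_le (show m + 1 - i ≤ m by have := hi.1; omega) hj.2]
  omega

end SimpleGraph.IsThreshold

/-- every key edge of a hamiltonian threshold graph lies in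
at least one Hamilton cycle. -/
theorem stmt4 {V : Type} [Fintype V] [DecidableEq V] (G : SimpleGraph V) (m : ℕ) (δ : ℕ → ℕ)
    (hG : G.IsThreshold) (hdp : G.DegreePartition m δ) (hham : G.IsHamiltonian)
    (e : Sym2 V) (he : G.IsKeyEdge m δ e) :
    ∃ (v : V) (w : G.Walk v v), w.IsHamiltonianCycle ∧ e ∈ w.edges := by
  obtain ⟨hxy, x, y, k, rfl, hk1, hkm, hx, hy⟩ := he
  have hxy : G.Adj x y := hxy
  have : Nontrivial V := ⟨⟨x, y, hxy.ne⟩⟩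
  obtain ⟨c, hc⟩ := hham.exists_isHamiltonianCycle x
  suffices hnbr : ∀ q s, G.Adj x q → G.Adj y s → q ≠ s → G.Adj q s from
    ⟨x, exists_isHamiltonianCycle_mem_edges hxy hnbr hc⟩
  intro q s hxq hys hqs
  obtain ⟨jq, hjq, hq⟩ := hdp.exists_eq_of_deg_pos (deg_pos_of_adj hxq.symm)
  obtain ⟨js, hjs, hs⟩ := hdp.exists_eq_of_deg_pos (deg_pos_of_adj hys.symm)
  have hk : k ∈ Set.Icc 1 m := ⟨hk1, by omega⟩
  have hk' : m + 1 - k ∈ Set.Icc 1 m := ⟨by omega, by omega⟩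
  have hxq' := (hG.adj_iff_le_add hdp hk hjq hx hq hxq.ne).1 hxq
  have hys' := (hG.adj_iff_le_add hdp hk' hjs hy hs hys.ne).1 hys
  exact (hG.adj_iff_le_add hdp hjq hjs hq hs hqs).2 (by omega)
end

section
/- In G_{2k+1} (k ≥ 2), the two vertices u, v of degree ⌈(2k+1)/2⌉ = k+1 are adjacent, and the edge uv lies in every Hamilton cycle of G_{2k+1}. -/
open SimpleGraph Finset

/-!
In a threshold graph a vertex of larger degree has larger weight. So if two vertices `x, y` of
degree at most `k + 1` are adjacent, then `y` is adjacent to `x` and to each of the `k` vertices of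
degree above `k + 1`, and symmetrically for `x`; both have degree exactly `k + 1`, i.e.
`{x, y} = {u, v}`. Hence the `k + 1` vertices of degree at most `k + 1` span no edge except `uv`.
Since `u` has more neighbours than there are vertices of degree above `k + 1`, `uv` is an edge; and a
Hamilton cycle on `2k + 1` vertices avoiding `uv` would have `k + 1` pairwise non-consecutive
vertices, which double counting of the cycle edges rules out.
-/

lemma countP_gnDegSeq_odd (p : ℕ → Prop) [DecidablePred p] (k : ℕ) :
    (gnDegSeq (2 * k + 1)).countP p =
      #{i ∈ range (2 * k - 1) | p (i + 2)} + (if p (k + 1) then 1 else 0) +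
        (if p (2 * k) then 1 else 0) := by
  have h₁ : 2 * k + 1 - 2 = 2 * k - 1 := by omega
  have h₂ : (2 * k + 1 + 1) / 2 = k + 1 := by omega
  rw [gnDegSeq, h₁, h₂, add_tsub_cancel_right, Multiset.countP_add, Multiset.countP_map,
    Multiset.insert_eq_cons, Multiset.countP_cons, ← Multiset.cons_zero, Multiset.countP_cons,
    Multiset.countP_zero, zero_add, add_assoc, add_comm (ite _ _ _)]
  rfl

lemma countP_le_gnDegSeq_odd {k : ℕ} (hk : 2 ≤ k) :
    (gnDegSeq (2 * k + 1)).countP (· ≤ k + 1) = k + 1 := by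
  have hfilter : {i ∈ range (2 * k - 1) | i + 2 ≤ k + 1} = range k := by ext; simp; omega
  rw [countP_gnDegSeq_odd, hfilter, card_range, if_pos le_rfl, if_neg (by omega)]

lemma countP_lt_gnDegSeq_odd {k : ℕ} (hk : 2 ≤ k) :
    (gnDegSeq (2 * k + 1)).countP (k + 1 < ·) = k := by
  have hfilter : {i ∈ range (2 * k - 1) | k + 1 < i + 2} = Ico k (2 * k - 1) := by ext; simp; omega
  rw [countP_gnDegSeq_odd, hfilter, Nat.card_Ico, if_neg (lt_irrefl _), if_pos (by omega)]
  omega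

lemma countP_eq_gnDegSeq_odd {k : ℕ} (hk : 2 ≤ k) :
    (gnDegSeq (2 * k + 1)).countP (· = k + 1) = 2 := by
  have hfilter : {i ∈ range (2 * k - 1) | i + 2 = k + 1} = {k - 1} := by ext; simp; omega
  rw [countP_gnDegSeq_odd, hfilter, card_singleton, if_pos rfl, if_neg (by omega)]

namespace SimpleGraph.Walk

variable {V : Type} {G : SimpleGraph V} {u v w : V}

lemma IsTrail.card_edgesFinset {p : G.Walk u v} (h : p.IsTrail) :
    #h.edgesFinset = p.length := by
  change Multiset.card (p.edges : Multiset (Sym2 V)) = _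
  rw [Multiset.coe_card, length_edges]

lemma IsTrail.card_filter_mem_edgesFinset [DecidableEq V] {p : G.Walk u v} (h : p.IsTrail)
    (x : V) : #{e ∈ h.edgesFinset | x ∈ e} = p.edges.countP (x ∈ ·) := by
  change Multiset.card (Multiset.filter _ (p.edges : Multiset (Sym2 V))) = _
  rw [← Multiset.countP_eq_card_filter, Multiset.coe_countP]

lemma IsCycle.two_le_countP_edges [DecidableEq V] {c : G.Walk w w} (hc : c.IsCycle) {x : V}
    (hx : x ∈ c.support) : 2 ≤ c.edges.countP (x ∈ ·) := by
  obtain ⟨e, he, hxe⟩ := (mem_support_iff_exists_mem_edges_of_not_nil hc.not_nil).1 hx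
  have hpos : 0 < c.edges.countP (x ∈ ·) := List.countP_pos_iff.2 ⟨e, he, by simpa using hxe⟩
  obtain ⟨m, hm⟩ := (hc.isTrail.even_countP_edges_iff x).2 fun h => (h rfl).elim
  omega

lemma IsHamiltonianCycle.two_mul_card_le [Fintype V] [DecidableEq V] {c : G.Walk w w}
    (hc : c.IsHamiltonianCycle) (S : Finset V)
    (hS : ∀ x ∈ S, ∀ y ∈ S, s(x, y) ∉ c.edges) : 2 * #S ≤ Fintype.card V := by
  have htrail := hc.isCycle.isTrail
  have key := card_mul_le_card_mul (fun x e => x ∈ e) (m := 2) (n := 1)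
    (s := S) (t := htrail.edgesFinset) (fun x _ => ?_) (fun e he => ?_)
  · rwa [htrail.card_edgesFinset, hc.length_eq, mul_one, mul_comm] at key
  · rw [bipartiteAbove, htrail.card_filter_mem_edgesFinset]
    exact hc.isCycle.two_le_countP_edges (hc.mem_support x)
  · refine card_le_one.2 fun a ha b hb => by_contra fun hab => ?_
    rw [mem_bipartiteBelow] at ha hb
    rw [(Sym2.mem_and_mem_iff hab).1 ⟨ha.2, hb.2⟩] at he
    exact hS a ha.1 b hb.1 he

end SimpleGraph.Walk

namespace SimpleGraph

variable {V : Type} [Fintype V] [DecidableEq V] {G : SimpleGraph V}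

lemma card_filter_deg (p : ℕ → Prop) [DecidablePred p] :
    #{x | p (G.deg x)} = G.degMultiset.countP p := by
  rw [degMultiset, Multiset.countP_map]
  rfl

lemma exists_adj_deg_le_of_card_lt {d : ℕ} {x : V} (hx : #{z | d < G.deg z} < G.deg x) :
    ∃ y, G.Adj x y ∧ G.deg y ≤ d := by
  classical
  by_contra! h
  have hsub : G.neighborFinset x ⊆ ({z | d < G.deg z} : Finset V) := fun z hz => by
    simpa using h z ((mem_neighborFinset _ _ _).1 hz)
  have := card_le_card hsub
  rw [card_neighborFinset_eq_degree, ← deg_eq_degree] at this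
  omega

section Threshold

variable {f : V → ℝ} {t : ℝ} {x y z : V}

lemma deg_le_deg_of_weight_le (hG : ∀ a b, a ≠ b → (G.Adj a b ↔ f a + f b > t))
    (h : f x ≤ f y) : G.deg x ≤ G.deg y := by
  rcases eq_or_ne x y with rfl | hxy
  · rfl
  classical
  simp only [deg_eq_degree, ← card_neighborFinset_eq_degree]
  refine card_le_card_of_injOn (Equiv.swap x y) (fun z hz => ?_) (Equiv.swap x y).injective.injOn
  rw [mem_coe, mem_neighborFinset] at hz ⊢
  rcases eq_or_ne z y with rfl | hzy
  · rw [Equiv.swap_apply_right]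
    exact hz.symm
  · rw [Equiv.swap_apply_of_ne_of_ne hz.ne' hzy]
    exact (hG y z hzy.symm).2 (by linarith [(hG x z hz.ne).1 hz])

lemma adj_of_adj_of_deg_lt (hG : ∀ a b, a ≠ b → (G.Adj a b ↔ f a + f b > t))
    (hxy : G.Adj x y) (hxz : G.deg x < G.deg z) (hyz : y ≠ z) : G.Adj y z := by
  have hf : f x < f z := lt_of_not_ge fun h => (deg_le_deg_of_weight_le hG h).not_gt hxz
  exact (hG y z hyz).2 (by linarith [(hG x y hxy.ne).1 hxy])

lemma card_filter_lt_deg_lt_deg_of_adj (hG : ∀ a b, a ≠ b → (G.Adj a b ↔ f a + f b > t))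
    {d : ℕ} (hxy : G.Adj x y) (hx : G.deg x ≤ d) (hy : G.deg y ≤ d) :
    #{z | d < G.deg z} < G.deg y := by
  classical
  have hsub : insert x ({z | d < G.deg z} : Finset V) ⊆ G.neighborFinset y := by
    intro z hz
    rw [mem_insert, mem_filter_univ] at hz
    rw [mem_neighborFinset]
    rcases hz with rfl | hz
    · exact hxy.symm
    · exact adj_of_adj_of_deg_lt hG hxy (by omega) (by rintro rfl; omega)
  have hx' : x ∉ ({z | d < G.deg z} : Finset V) := by simpa using hx
  have := card_le_card hsub
  rw [card_insert_of_notMem hx', card_neighborFinset_eq_degree, ← deg_eq_degree] at this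
  omega

end Threshold

end SimpleGraph

/-- in `G_{2k+1}` (`k ≥ 2`), the two vertices `u, v` of degree `k + 1` are
adjacent and the edge `uv` lies on every Hamilton cycle. -/
theorem stmt11 {V : Type} [Fintype V] [DecidableEq V] (k : ℕ) (hk : 2 ≤ k) (G : SimpleGraph V)
    (hG : G.IsThreshold) (hcard : Fintype.card V = 2 * k + 1)
    (hdeg : G.degMultiset = gnDegSeq (2 * k + 1))
    (u v : V) (huv : u ≠ v) (hu : G.deg u = k + 1) (hv : G.deg v = k + 1) :
    G.Adj u v ∧ ∀ (w : V) (c : G.Walk w w), c.IsHamiltonianCycle → s(u, v) ∈ c.edges := by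
  obtain ⟨f, t, -, -, hft⟩ := hG
  have hhigh : #{z | k + 1 < G.deg z} = k := by
    rw [card_filter_deg, hdeg, countP_lt_gnDegSeq_odd hk]
  have hlow : #({z | G.deg z ≤ k + 1} : Finset V) = k + 1 := by
    rw [card_filter_deg (· ≤ k + 1), hdeg, countP_le_gnDegSeq_odd hk]
  have hmid : ∀ z, G.deg z = k + 1 → z ∈ s(u, v) := by
    have hpair : ({u, v} : Finset V) = ({z | G.deg z = k + 1} : Finset V) :=
      eq_of_subset_of_card_le (by simp [insert_subset_iff, hu, hv]) (by
        rw [card_filter_deg (· = k + 1), hdeg, countP_eq_gnDegSeq_odd hk, card_pair huv])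
    intro z hz
    have hz' : z ∈ ({u, v} : Finset V) := hpair ▸ (mem_filter_univ z).2 hz
    simpa using hz'
  have hlow_edge : ∀ x y, G.Adj x y → G.deg x ≤ k + 1 → G.deg y ≤ k + 1 →
      s(x, y) = s(u, v) := by
    intro x y hxy hx hy
    have hx' := card_filter_lt_deg_lt_deg_of_adj hft hxy.symm hy hx
    have hy' := card_filter_lt_deg_lt_deg_of_adj hft hxy hx hy
    exact ((Sym2.mem_and_mem_iff hxy.ne).1 ⟨hmid x (by omega), hmid y (by omega)⟩).symm
  have hadj : G.Adj u v := by
    obtain ⟨y, huy, hy⟩ := exists_adj_deg_le_of_card_lt (x := u) (hhigh.trans_lt (by omega))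
    rwa [← Sym2.congr_right.1 (hlow_edge u y huy hu.le hy)]
  refine ⟨hadj, fun w c hc => by_contra fun huv_notMem => ?_⟩
  have hhalf := hc.two_mul_card_le {z | G.deg z ≤ k + 1} fun x hx y hy hxy => huv_notMem <|
    hlow_edge x y (c.adj_of_mem_edges hxy) (by simpa using hx) (by simpa using hy) ▸ hxy
  rw [hlow, hcard] at hhalf
  omega
end

section
/- In G_{2k} (k ≥ 2), let x, y be the two vertices of degree k and z the unique vertex of degree k+1. Then both G_{2k} − xz and G_{2k} − yz are non-hamiltonian, and consequently the path x–z–y lies on every Hamilton cycle of G_{2k}. -/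
open SimpleGraph Finset

/-! Let `L` be the `k` vertices of degree at most `k`; the other `k` vertices have larger degree.
In a threshold graph a neighbour of `v` is adjacent to every other vertex of larger degree than
`v`, so an edge inside `L` would give one of its endpoints `k + 1` neighbours: `L` is independent.
A Hamilton cycle has `2k = 2|L|` edges and uses two edges at each vertex of `L`, so every cycle
edge meets `L`. The neighbours of `z` in `L` are `x` and `y` only: a neighbour of degree `< k`
(possible only for `k ≥ 3`) would also be adjacent to the `k - 1` vertices of degree `> k + 1`.
Hence the two cycle edges at `z` are `zx` and `zy`. -/

namespace SimpleGraph

variable {V : Type} {G : SimpleGraph V}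

lemma Walk.IsCycle.exists_ne_mk_mem_edges {u v : V} {c : G.Walk u u} (hc : c.IsCycle)
    (hv : v ∈ c.support) : ∃ a b, a ≠ b ∧ s(v, a) ∈ c.edges ∧ s(v, b) ∈ c.edges := by
  obtain ⟨a, b, hab, hN⟩ := Set.ncard_eq_two.mp (hc.ncard_neighborSet_toSubgraph_eq_two hv)
  have ha : a ∈ c.toSubgraph.neighborSet v := hN ▸ Set.mem_insert a {b}
  have hb : b ∈ c.toSubgraph.neighborSet v := hN ▸ Set.mem_insert_of_mem a rfl
  exact ⟨a, b, hab, adj_toSubgraph_iff_mem_edges.mp ha, adj_toSubgraph_iff_mem_edges.mp hb⟩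

lemma Walk.IsCycle.mk_mem_edges_of_forall {u x y z : V} {c : G.Walk u u} (hc : c.IsCycle)
    (hz : z ∈ c.support) (h : ∀ v, s(z, v) ∈ c.edges → v = x ∨ v = y) :
    s(x, z) ∈ c.edges ∧ s(y, z) ∈ c.edges := by
  obtain ⟨a, b, hab, ha, hb⟩ := hc.exists_ne_mk_mem_edges hz
  rw [Sym2.eq_swap (a := x), Sym2.eq_swap (a := y)]
  rcases h a ha with rfl | rfl <;> rcases h b hb with rfl | rfl <;> simp_all

variable [Fintype V] [DecidableEq V]

lemma Walk.IsHamiltonianCycle.exists_mem_of_isIndepSet {u : V} {c : G.Walk u u}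
    (hc : c.IsHamiltonianCycle) {S : Finset V} (hS : G.IsIndepSet (S : Set V))
    (hcard : Fintype.card V ≤ 2 * #S) {e : Sym2 V} (he : e ∈ c.edges) :
    ∃ v ∈ S, v ∈ e := by
  set E := c.edges.toFinset
  set I : V → Finset (Sym2 V) := fun v => {e ∈ E | v ∈ e}
  have hE : #E = Fintype.card V := by
    rw [List.toFinset_card_of_nodup hc.isCycle.isCircuit.isTrail.edges_nodup,
      Walk.length_edges, hc.length_eq]
  have hI : ∀ v, 2 ≤ #(I v) := fun v => by
    obtain ⟨a, b, hab, ha, hb⟩ := hc.isCycle.exists_ne_mk_mem_edges (hc.mem_support v)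
    calc 2 = #{s(v, a), s(v, b)} := (card_pair (Sym2.congr_right.not.mpr hab)).symm
      _ ≤ #(I v) := card_le_card (insert_subset (by simp [I, E, ha])
          (singleton_subset_iff.mpr (by simp [I, E, hb])))
  have hdisj : (S : Set V).PairwiseDisjoint I := fun a ha b hb hab => by
    refine Finset.disjoint_left.mpr fun e hea heb => hS ha hb hab ?_
    simp only [I, mem_filter, E, List.mem_toFinset] at hea heb
    exact c.adj_of_mem_edges ((Sym2.mem_and_mem_iff hab).mp ⟨hea.2, heb.2⟩ ▸ hea.1)
  have hcover : S.biUnion I = E := by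
    refine eq_of_subset_of_card_le (biUnion_subset.mpr fun v _ => filter_subset _ _) ?_
    rw [card_biUnion hdisj, hE]
    calc Fintype.card V ≤ ∑ _v ∈ S, 2 := by simpa [mul_comm] using hcard
      _ ≤ ∑ v ∈ S, #(I v) := sum_le_sum fun v _ => hI v
  obtain ⟨v, hv, -, hve⟩ : ∃ v ∈ S, e ∈ E ∧ v ∈ e := by
    have : e ∈ S.biUnion I := hcover ▸ List.mem_toFinset.mpr he
    simpa [I] using this
  exact ⟨v, hv, hve⟩

lemma not_isHamiltonian_deleteEdges_of_forall_mem_edges (hV : Fintype.card V ≠ 1) {e : Sym2 V}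
    (h : ∀ (u : V) (c : G.Walk u u), c.IsHamiltonianCycle → e ∈ c.edges) :
    ¬ (G.deleteEdges {e}).IsHamiltonian := fun hH => by
  obtain ⟨u, p, hp⟩ := hH hV
  have he := h u _ (hp.map (f := Hom.ofLE (G.deleteEdges_le {e})) Function.bijective_id)
  rw [Walk.edges_map] at he
  have := p.edges_subset_edgeSet (by simpa using he)
  simp at this

lemma card_filter_deg_eq_countP (G : SimpleGraph V) (p : ℕ → Prop) [DecidablePred p] :
    #{v | p (G.deg v)} = G.degMultiset.countP p := by
  rw [degMultiset, Multiset.countP_map]; rfl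

lemma deg_le_deg_of_forall_adj {b c : V} (h : ∀ w, w ≠ c → G.Adj b w → G.Adj c w) :
    G.deg b ≤ G.deg c := by
  refine Nat.card_le_card_of_injective
    (fun w => ⟨Equiv.swap b c w, ?_⟩) fun w w' hw => Subtype.ext ((Equiv.swap b c).injective
      (congrArg Subtype.val hw))
  obtain ⟨w, hw⟩ := w
  rcases eq_or_ne w c with rfl | hwc
  · simpa using hw.symm
  · rw [Equiv.swap_apply_of_ne_of_ne hw.ne' hwc]
    exact h w hwc hw

lemma IsThreshold.adj_of_adj_of_deg_lt (hG : G.IsThreshold) {a b c : V} (hab : G.Adj a b)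
    (hbc : G.deg b < G.deg c) (hac : a ≠ c) : G.Adj a c := by
  obtain ⟨f, t, -, -, hft⟩ := hG
  have hfab := (hft a b hab.ne).mp hab
  suffices f b ≤ f c from (hft a c hac).mpr (by linarith)
  by_contra! hfcb
  refine hbc.not_ge (deg_le_deg_of_forall_adj fun w hwb hcw => ?_)
  have := (hft c w hcw.ne).mp hcw
  exact (hft b w hwb.symm).mpr (by linarith)

lemma IsThreshold.card_filter_lt_deg_lt_deg (hG : G.IsThreshold) {u v : V} {m : ℕ}
    (huv : G.Adj u v) (hu : G.deg u ≤ m) (hv : G.deg v ≤ m) :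
    #{w | m < G.deg w} < G.deg u := by
  classical
  have hvH : v ∉ ({w | m < G.deg w} : Finset V) := by simpa using hv
  calc #{w | m < G.deg w} < #(insert v ({w | m < G.deg w} : Finset V)) :=
        card_lt_card (ssubset_insert hvH)
    _ ≤ #(G.neighborFinset u) := card_le_card fun w hw => by
        rcases mem_insert.mp hw with rfl | hw
        · simpa using huv
        · have hw : m < G.deg w := by simpa using hw
          exact (G.mem_neighborFinset u w).mpr
            (hG.adj_of_adj_of_deg_lt huv (by omega) (by rintro rfl; omega))
    _ = G.deg u := by
        rw [card_neighborFinset_eq_degree, ← card_neighborSet_eq_degree, deg,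
          Nat.card_eq_fintype_card]; rfl

end SimpleGraph

lemma gnDegSeq_two_mul {k : ℕ} (hk : 1 ≤ k) :
    gnDegSeq (2 * k) = (Ico 2 (2 * k)).val + {k, 2 * k - 1} := by
  have hIco := congrArg Finset.val (Finset.map_add_right_Ico 0 (2 * k - 2) 2)
  rw [Finset.map_val, ← Finset.range_eq_Ico, Finset.range_val,
    show 2 * k - 2 + 2 = 2 * k by omega] at hIco
  rw [gnDegSeq, show (2 * k + 1) / 2 = k by omega, ← hIco]
  rfl

lemma countP_gnDegSeq_two_mul {k : ℕ} (hk : 1 ≤ k) (p : ℕ → Prop) [DecidablePred p] :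
    (gnDegSeq (2 * k)).countP p =
      #{i ∈ Ico 2 (2 * k) | p i} + ((if p k then 1 else 0) + if p (2 * k - 1) then 1 else 0) := by
  rw [gnDegSeq_two_mul hk, Multiset.countP_add, Multiset.insert_eq_cons, Multiset.countP_cons,
    ← Multiset.cons_zero, Multiset.countP_cons, Multiset.countP_zero,
    Multiset.countP_eq_card_filter, ← Finset.filter_val, ← Finset.card_def]
  ring

section Gn

variable {V : Type} [Fintype V] [DecidableEq V] {G : SimpleGraph V} {k : ℕ}

lemma two_le_deg_of_degMultiset_eq (hk : 2 ≤ k) (hdeg : G.degMultiset = gnDegSeq (2 * k))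
    (v : V) : 2 ≤ G.deg v := by
  have hv : G.deg v ∈ G.degMultiset := Multiset.mem_map_of_mem _ (mem_univ v)
  rw [hdeg, gnDegSeq_two_mul (by omega)] at hv
  simp only [Multiset.mem_add, mem_val, mem_Ico, Multiset.insert_eq_cons, Multiset.mem_cons,
    Multiset.mem_singleton] at hv
  omega

lemma card_deg_le_of_degMultiset_eq (hk : 2 ≤ k) (hdeg : G.degMultiset = gnDegSeq (2 * k)) :
    #{v | G.deg v ≤ k} = k := by
  have hI : {i ∈ Ico 2 (2 * k) | i ≤ k} = Ico 2 (k + 1) := by ext; simp; omega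
  rw [G.card_filter_deg_eq_countP (· ≤ k), hdeg, countP_gnDegSeq_two_mul (by omega), hI,
    Nat.card_Ico, if_pos le_rfl, if_neg (by omega)]
  omega

lemma card_lt_deg_of_degMultiset_eq (hk : 2 ≤ k) (hdeg : G.degMultiset = gnDegSeq (2 * k))
    (m : ℕ) (hm : k ≤ m) (hm' : m < 2 * k - 1) :
    #{v | m < G.deg v} = 2 * k - m := by
  have hI : {i ∈ Ico 2 (2 * k) | m < i} = Ico (m + 1) (2 * k) := by ext; simp; omega
  rw [G.card_filter_deg_eq_countP, hdeg, countP_gnDegSeq_two_mul (by omega), hI, Nat.card_Ico,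
    if_neg (by omega), if_pos hm']
  omega

lemma card_deg_eq_of_degMultiset_eq (hk : 2 ≤ k) (hdeg : G.degMultiset = gnDegSeq (2 * k)) :
    #{v | G.deg v = k} = 2 := by
  have hI : {i ∈ Ico 2 (2 * k) | i = k} = {k} := by ext; simp; omega
  rw [G.card_filter_deg_eq_countP (· = k), hdeg, countP_gnDegSeq_two_mul (by omega), hI,
    card_singleton, if_pos rfl, if_neg (by omega)]

lemma isIndepSet_deg_le_of_degMultiset_eq (hG : G.IsThreshold) (hk : 2 ≤ k)
    (hdeg : G.degMultiset = gnDegSeq (2 * k)) : G.IsIndepSet {v | G.deg v ≤ k} :=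
  fun u hu v hv _ huv => by
    have := hG.card_filter_lt_deg_lt_deg huv hu hv
    rw [card_lt_deg_of_degMultiset_eq hk hdeg k le_rfl (by omega)] at this
    exact (show G.deg u ≤ k from hu).not_gt (by omega)

lemma deg_eq_of_adj_of_deg_le (hG : G.IsThreshold) (hk : 2 ≤ k)
    (hdeg : G.degMultiset = gnDegSeq (2 * k)) {u z : V} (hz : G.deg z = k + 1) (hzu : G.Adj z u)
    (hu : G.deg u ≤ k) : G.deg u = k := by
  by_contra hne
  have h2 := two_le_deg_of_degMultiset_eq hk hdeg u
  have := hG.card_filter_lt_deg_lt_deg hzu.symm (m := k + 1) (by omega) hz.le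
  rw [card_lt_deg_of_degMultiset_eq hk hdeg (k + 1) (by omega) (by omega)] at this
  omega

end Gn

/-- in `G_{2k}` (`k ≥ 2`), with `x, y` the two vertices of degree `k` and `z`
the vertex of degree `k + 1`, both `G_{2k} - xz` and `G_{2k} - yz` are non-hamiltonian, and
the path `x–z–y` lies on every Hamilton cycle of `G_{2k}`. -/
theorem stmt12 {V : Type} [Fintype V] [DecidableEq V] (k : ℕ) (hk : 2 ≤ k) (G : SimpleGraph V)
    (hG : G.IsThreshold) (hcard : Fintype.card V = 2 * k)
    (hdeg : G.degMultiset = gnDegSeq (2 * k))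
    (x y z : V) (hxy : x ≠ y) (hx : G.deg x = k) (hy : G.deg y = k) (hz : G.deg z = k + 1) :
    ¬ (G.deleteEdges {s(x, z)}).IsHamiltonian ∧
    ¬ (G.deleteEdges {s(y, z)}).IsHamiltonian ∧
    ∀ (w : V) (c : G.Walk w w), c.IsHamiltonianCycle →
      s(x, z) ∈ c.edges ∧ s(y, z) ∈ c.edges := by
  have hdeg_k : ({v | G.deg v = k} : Finset V) = {x, y} := by
    refine (eq_of_subset_of_card_le (fun v hv => ?_) ?_).symm
    · rcases mem_insert.mp hv with rfl | hv
      · simpa using hx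
      · simpa [mem_singleton.mp hv] using hy
    · rw [card_deg_eq_of_degMultiset_eq hk hdeg, card_pair hxy]
  have hz_nbrs : ∀ u, G.Adj z u → G.deg u ≤ k → u = x ∨ u = y := fun u hzu hu => by
    have : u ∈ ({v | G.deg v = k} : Finset V) := by
      simpa using deg_eq_of_adj_of_deg_le hG hk hdeg hz hzu hu
    simpa [hdeg_k] using this
  have hcycle : ∀ (w : V) (c : G.Walk w w), c.IsHamiltonianCycle →
      s(x, z) ∈ c.edges ∧ s(y, z) ∈ c.edges := fun w c hc => by
    refine hc.isCycle.mk_mem_edges_of_forall (hc.mem_support z) fun u hu =>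
      hz_nbrs u (c.adj_of_mem_edges hu) ?_
    obtain ⟨v, hv, hvu⟩ := hc.exists_mem_of_isIndepSet (S := {v | G.deg v ≤ k})
      (by simpa using isIndepSet_deg_le_of_degMultiset_eq hG hk hdeg)
      (by rw [card_deg_le_of_degMultiset_eq hk hdeg, hcard]) hu
    rw [mem_filter_univ] at hv
    rcases Sym2.mem_iff.mp hvu with rfl | rfl
    · omega
    · exact hv
  have hV : Fintype.card V ≠ 1 := by omega
  exact ⟨not_isHamiltonian_deleteEdges_of_forall_mem_edges hV fun w c hc => (hcycle w c hc).1,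
    not_isHamiltonian_deleteEdges_of_forall_mem_edges hV fun w c hc => (hcycle w c hc).2, hcycle⟩
end
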